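/- Let k, k' ∈ A_c(Y) with symbols ℓ = π_c(k) and ℓ' = π_c(k'). Then τ₀^r(k ∘ k' − k' ∘ k) = σ₁(ℓ, ℓ'). Equivalently, the pair (τ₀^r, σ₁) is a relative 0-cocycle for the symbol homomorphism π_c : A_c(Y) → B_c(Y): the Hochschild coboundary b τ₀^r equals the pullback of σ₁ by π_c. -/

import Mathlib

open MeasureTheory Filter

noncomputable section

/-- `χ^λ`; thus `χ⁰ = chi 0`. -/
def chi (l : ℝ) (s : ℝ) : ℂ := if s ≤ -l then 1 else 0

/-- `ℓ ∈ B_c(Y)`. -/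
def MemBc {Y : Type*} [TopologicalSpace Y] (ℓ : Y → Y → ℝ → ℂ) : Prop :=
  Continuous (fun q : Y × Y × ℝ => ℓ q.1 q.2.1 q.2.2) ∧
    ∃ R > (0 : ℝ), ∀ y y' t, t ∉ Set.Icc (-R) R → ℓ y y' t = 0

/-- `ℓ ⋆ ℓ'`. -/
def conv {Y : Type*} [MeasurableSpace Y] (μ : Measure Y)
    (ℓ ℓ' : Y → Y → ℝ → ℂ) : Y → Y → ℝ → ℂ :=
  fun y y'' u => ∫ q : Y × ℝ, ℓ y q.1 q.2 * ℓ' q.1 y'' (u - q.2) ∂(μ.prod volume)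

/-- Roe's 1-cocycle `σ₁`. -/
def sigma1 {Y : Type*} [MeasurableSpace Y] (μ : Measure Y)
    (ℓ₀ ℓ₁ : Y → Y → ℝ → ℂ) : ℂ :=
  ∫ q : (Y × Y) × ℝ × ℝ,
    ℓ₀ q.1.1 q.1.2 (q.2.1 - q.2.2) * ℓ₁ q.1.2 q.1.1 (q.2.2 - q.2.1) *
      (chi 0 q.2.2 - chi 0 q.2.1) ∂((μ.prod μ).prod (volume.prod volume))

/-- `k ∈ A_c(Y)` with `π_c(k) = ℓ`. -/
def MemAc {Y : Type*} [TopologicalSpace Y] (k : Y × ℝ → Y × ℝ → ℂ)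
    (ℓ : Y → Y → ℝ → ℂ) : Prop :=
  Continuous (fun q : (Y × ℝ) × (Y × ℝ) => k q.1 q.2) ∧
    ∃ l > (0 : ℝ),
      (∀ y s y' s', s ≤ -l → s' ≤ -l → k (y, s) (y', s') = ℓ y y' (s - s')) ∧
      HasCompactSupport (fun q : (Y × ℝ) × (Y × ℝ) =>
        if q.1.2 ≤ -l ∧ q.2.2 ≤ -l then 0 else k q.1 q.2)

/-- `k ∘ k'`. -/
def kcomp {Y : Type*} [MeasurableSpace Y] (μ : Measure Y)
    (k k' : Y × ℝ → Y × ℝ → ℂ) : Y × ℝ → Y × ℝ → ℂ :=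
  fun p q => ∫ r : Y × ℝ, k p r * k' r q ∂(μ.prod volume)

/-- The truncated trace whose limit as `λ → +∞` is `τ₀^r(k)`. -/
def phiReg {Y : Type*} [MeasurableSpace Y] (μ : Measure Y)
    (k : Y × ℝ → Y × ℝ → ℂ) (ℓ : Y → Y → ℝ → ℂ) (l : ℝ) : ℂ :=
  (∫ p : Y × ℝ, (if -l ≤ p.2 then k p p else 0) ∂(μ.prod volume)) -
    (l : ℂ) * ∫ y, ℓ y y 0 ∂μ

/-!
Choose `Λ` so large that `k` and `k'` agree with their symbols as soon as one of the two time
variables is `≤ -Λ`. The symbol part of the truncated trace vanishes: `∫ (ℓ ⋆ ℓ')(y, y, 0) dμ(y)`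
and `∫ (ℓ' ⋆ ℓ)(y, y, 0) dμ(y)` are exchanged by the substitution `(y, y', t) ↦ (y', y, -t)`.
By Fubini, the truncated trace of the commutator is
`∫∫ (1[s ≥ -Λ] - 1[s' ≥ -Λ]) k(y, s, y', s') k'(y', s', y, s)`, whose integrand vanishes unless
exactly one of `s, s'` is below `-Λ`. There both kernels may be replaced by their symbols, and
shifting both time variables by `Λ` turns the integral into `σ₁(ℓ, ℓ')`. Hence the truncated
trace equals `σ₁(ℓ, ℓ')` for every large `Λ`.
-/

open Set

section Symbols

variable {Y : Type*} [TopologicalSpace Y] {k : Y × ℝ → Y × ℝ → ℂ} {ℓ : Y → Y → ℝ → ℂ}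

theorem MemBc.hasCompactSupport [CompactSpace Y] (hℓ : MemBc ℓ) :
    HasCompactSupport (fun q : Y × Y × ℝ => ℓ q.1 q.2.1 q.2.2) := by
  obtain ⟨-, R, -, hR⟩ := hℓ
  exact HasCompactSupport.intro' (isCompact_univ.prod (isCompact_univ.prod isCompact_Icc))
    (isClosed_univ.prod (isClosed_univ.prod isClosed_Icc))
    fun q hq => hR _ _ _ fun ht => hq ⟨trivial, trivial, ht⟩

theorem MemAc.exists_far_or_bounded (hk : MemAc k ℓ) :
    ∃ l > (0 : ℝ), ∃ M : ℝ,
      (∀ y s y' s', s ≤ -l → s' ≤ -l → k (y, s) (y', s') = ℓ y y' (s - s')) ∧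
      ∀ p r : Y × ℝ, k p r ≠ 0 → (p.2 ≤ -l ∧ r.2 ≤ -l) ∨ (|p.2| ≤ M ∧ |r.2| ≤ M) := by
  obtain ⟨-, l, hl, hsymb, hcpt⟩ := hk
  obtain ⟨M, hM⟩ := hcpt.isCompact.bddAbove_image
    (f := fun q : (Y × ℝ) × (Y × ℝ) => max |q.1.2| |q.2.2|) (by fun_prop)
  refine ⟨l, hl, M, hsymb, fun p r hpr => or_iff_not_imp_left.2 fun hnear => ?_⟩
  have hmem : (p, r) ∈ tsupport fun q : (Y × ℝ) × (Y × ℝ) =>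
      if q.1.2 ≤ -l ∧ q.2.2 ≤ -l then 0 else k q.1 q.2 :=
    subset_tsupport _ (by simpa [hnear] using hpr)
  exact max_le_iff.1 (hM ⟨_, hmem, rfl⟩)

theorem MemAc.eventually_eq_symbol (hk : MemAc k ℓ) (hℓ : MemBc ℓ) :
    ∀ᶠ Λ in atTop, ∀ p r : Y × ℝ, p.2 ≤ -Λ ∨ r.2 ≤ -Λ → k p r = ℓ p.1 r.1 (p.2 - r.2) := by
  obtain ⟨l, -, M, hsymb, hsupp⟩ := hk.exists_far_or_bounded
  obtain ⟨-, R, -, hℓR⟩ := hℓ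
  filter_upwards [eventually_gt_atTop (l + R), eventually_gt_atTop M] with Λ hΛl hΛM p r hpr
  by_cases hnear : p.2 ≤ -l ∧ r.2 ≤ -l
  · exact hsymb _ _ _ _ hnear.1 hnear.2
  have hk0 : k p r = 0 := by
    by_contra hne
    rcases hsupp p r hne with hfar | ⟨hp, hr⟩
    · exact hnear hfar
    · rcases hpr with h | h
      · linarith [(abs_le.1 hp).1]
      · linarith [(abs_le.1 hr).1]
  have hℓ0 : ℓ p.1 r.1 (p.2 - r.2) = 0 :=
    hℓR _ _ _ fun ⟨h₁, h₂⟩ => hnear (by rcases hpr with h | h <;> constructor <;> linarith)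
  rw [hk0, hℓ0]

theorem MemAc.exists_support_bound (hk : MemAc k ℓ) (hℓ : MemBc ℓ) :
    ∃ D : ℝ, ∀ p r : Y × ℝ, k p r ≠ 0 → p.2 ≤ D ∧ |p.2 - r.2| ≤ D := by
  obtain ⟨l, hl, M, hsymb, hsupp⟩ := hk.exists_far_or_bounded
  obtain ⟨-, R, hR, hℓR⟩ := hℓ
  refine ⟨max R (2 * M), fun p r hpr => ?_⟩
  rcases hsupp p r hpr with ⟨hp, hr⟩ | ⟨hp, hr⟩
  · have hdiff : |p.2 - r.2| ≤ R := by
      rw [abs_le]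
      by_contra hout
      exact hpr (by rw [hsymb _ _ _ _ hp hr]; exact hℓR _ _ _ hout)
    exact ⟨by linarith [le_max_left R (2 * M)], hdiff.trans (le_max_left _ _)⟩
  · have hdiff : |p.2 - r.2| ≤ 2 * M := by linarith [abs_sub p.2 r.2]
    refine ⟨?_, hdiff.trans (le_max_right _ _)⟩
    linarith [le_abs_self p.2, abs_nonneg r.2, le_max_right R (2 * M)]

end Symbols

section ProdProdProdComm

variable {α β γ δ : Type*} [MeasurableSpace α] [MeasurableSpace β] [MeasurableSpace γ]
  [MeasurableSpace δ]

def MeasurableEquiv.prodProdProdComm : (α × β) × γ × δ ≃ᵐ (α × γ) × β × δ where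
  toEquiv := Equiv.prodProdProdComm α β γ δ
  measurable_toFun := by dsimp [Equiv.prodProdProdComm]; fun_prop
  measurable_invFun := by dsimp [Equiv.prodProdProdComm]; fun_prop

theorem MeasureTheory.measurePreserving_prodProdProdComm (μa : Measure α) (μb : Measure β)
    (μc : Measure γ) (μd : Measure δ) [SFinite μa] [SFinite μb] [SFinite μc] [SFinite μd] :
    MeasurePreserving MeasurableEquiv.prodProdProdComm ((μa.prod μb).prod (μc.prod μd))
      ((μa.prod μc).prod (μb.prod μd)) := by
  have hmiddle : MeasurePreserving (fun x : β × γ × δ => (x.2.1, x.1, x.2.2))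
      (μb.prod (μc.prod μd)) (μc.prod (μb.prod μd)) :=
    (measurePreserving_prodAssoc μc μb μd).comp
      ((Measure.measurePreserving_swap.prod (MeasurePreserving.id μd)).comp
        ((measurePreserving_prodAssoc μb μc μd).symm MeasurableEquiv.prodAssoc))
  exact ((measurePreserving_prodAssoc μa μc (μb.prod μd)).symm MeasurableEquiv.prodAssoc).comp
    (((MeasurePreserving.id μa).prod hmiddle).comp (measurePreserving_prodAssoc μa μb (μc.prod μd)))

end ProdProdProdComm

theorem chi_zero_add (Λ s : ℝ) : chi 0 (s + Λ) = chi Λ s := by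
  simp only [chi, neg_zero, ← le_neg_iff_add_nonpos_right]

section Kernels

variable {Y : Type*} [MeasurableSpace Y] (μ : Measure Y)
  {k k' : Y × ℝ → Y × ℝ → ℂ} {ℓ ℓ' : Y → Y → ℝ → ℂ}

local notation "ν" => Measure.prod μ (volume : Measure ℝ)
local notation "ν²" =>
  Measure.prod (Measure.prod μ (volume : Measure ℝ)) (Measure.prod μ (volume : Measure ℝ))

section SFinite

variable [SFinite μ]

theorem integrableOn_kcomp_diag {S : Set (Y × ℝ)}
    (h : IntegrableOn (fun q : (Y × ℝ) × (Y × ℝ) => k q.1 q.2 * k' q.2 q.1) (S ×ˢ univ) ν²) :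
    IntegrableOn (fun p => kcomp μ k k' p p) S ν := by
  rw [IntegrableOn, ← Measure.prod_restrict, Measure.restrict_univ] at h
  exact h.integral_prod_left

theorem setIntegral_kcomp_diag {S : Set (Y × ℝ)}
    (h : IntegrableOn (fun q : (Y × ℝ) × (Y × ℝ) => k q.1 q.2 * k' q.2 q.1) (S ×ˢ univ) ν²) :
    ∫ p in S, kcomp μ k k' p p ∂ν = ∫ q in S ×ˢ univ, k q.1 q.2 * k' q.2 q.1 ∂ν² := by
  rw [setIntegral_prod _ h, Measure.restrict_univ]
  rfl

theorem setIntegral_kcomp_diag_commutator {S : Set (Y × ℝ)}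
    (h : IntegrableOn (fun q : (Y × ℝ) × (Y × ℝ) => k q.1 q.2 * k' q.2 q.1) (S ×ˢ univ) ν²)
    (h' : IntegrableOn (fun q : (Y × ℝ) × (Y × ℝ) => k' q.1 q.2 * k q.2 q.1) (S ×ˢ univ) ν²) :
    ∫ p in S, (kcomp μ k k' p p - kcomp μ k' k p p) ∂ν =
      ∫ q in S ×ˢ univ, k q.1 q.2 * k' q.2 q.1 ∂ν² -
        ∫ q in univ ×ˢ S, k q.1 q.2 * k' q.2 q.1 ∂ν² := by
  have hswap : ∫ q in S ×ˢ univ, k' q.1 q.2 * k q.2 q.1 ∂ν² =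
      ∫ q in univ ×ˢ S, k q.1 q.2 * k' q.2 q.1 ∂ν² := by
    rw [← setIntegral_prod_swap]
    simp only [Prod.fst_swap, Prod.snd_swap, mul_comm]
  rw [integral_sub (integrableOn_kcomp_diag μ h) (integrableOn_kcomp_diag μ h'),
    setIntegral_kcomp_diag μ h, setIntegral_kcomp_diag μ h', hswap]

theorem integral_symbol_mul_chi_sub_eq_sigma1 (Λ : ℝ) :
    ∫ q : (Y × ℝ) × (Y × ℝ), ℓ q.1.1 q.2.1 (q.1.2 - q.2.2) * ℓ' q.2.1 q.1.1 (q.2.2 - q.1.2) *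
      (chi Λ q.2.2 - chi Λ q.1.2) ∂ν² = sigma1 μ ℓ ℓ' := by
  let shift : (Y × Y) × ℝ × ℝ ≃ᵐ (Y × Y) × ℝ × ℝ :=
    (MeasurableEquiv.refl _).prodCongr
      ((MeasurableEquiv.addRight Λ).prodCongr (MeasurableEquiv.addRight Λ))
  have hT : MeasurePreserving (MeasurableEquiv.prodProdProdComm.trans shift) ν²
      ((μ.prod μ).prod (volume.prod volume)) :=
    ((MeasurePreserving.id _).prod ((measurePreserving_add_right _ Λ).prod
      (measurePreserving_add_right _ Λ))).comp (measurePreserving_prodProdProdComm _ _ _ _)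
  rw [sigma1, ← hT.integral_comp']
  congr 1 with q
  simp [shift, MeasurableEquiv.prodProdProdComm, MeasurableEquiv.prodCongr, chi_zero_add]

theorem setIntegral_sub_setIntegral_eq_sigma1 {Λ : ℝ}
    (hk : ∀ p r : Y × ℝ, p.2 ≤ -Λ ∨ r.2 ≤ -Λ → k p r = ℓ p.1 r.1 (p.2 - r.2))
    (hk' : ∀ p r : Y × ℝ, p.2 ≤ -Λ ∨ r.2 ≤ -Λ → k' p r = ℓ' p.1 r.1 (p.2 - r.2))
    (hint : IntegrableOn (fun q : (Y × ℝ) × (Y × ℝ) => k q.1 q.2 * k' q.2 q.1)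
      ({p : Y × ℝ | -Λ ≤ p.2} ×ˢ univ ∪ univ ×ˢ {p | -Λ ≤ p.2}) ν²) :
    ∫ q in {p : Y × ℝ | -Λ ≤ p.2} ×ˢ univ, k q.1 q.2 * k' q.2 q.1 ∂ν² -
      ∫ q in univ ×ˢ {p : Y × ℝ | -Λ ≤ p.2}, k q.1 q.2 * k' q.2 q.1 ∂ν² = sigma1 μ ℓ ℓ' := by
  have hS : MeasurableSet {p : Y × ℝ | -Λ ≤ p.2} := measurableSet_le measurable_const measurable_snd
  rw [← integral_indicator (hS.prod .univ), ← integral_indicator (MeasurableSet.univ.prod hS),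
    ← integral_sub ((hint.mono_set subset_union_left).integrable_indicator (hS.prod .univ))
      ((hint.mono_set subset_union_right).integrable_indicator (MeasurableSet.univ.prod hS)),
    ← integral_symbol_mul_chi_sub_eq_sigma1 μ Λ]
  -- `1[-Λ ≤ s] = 1 - chi Λ s` except at `s = -Λ`
  have hoff : ∀ᵐ p ∂ν, p.2 ≠ -Λ :=
    Measure.quasiMeasurePreserving_snd.ae (Measure.ae_ne volume (-Λ))
  refine integral_congr_ae ?_
  filter_upwards [Measure.quasiMeasurePreserving_fst.ae hoff,
    Measure.quasiMeasurePreserving_snd.ae hoff] with q h₁ h₂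
  have hfar : q.1.2 ≤ -Λ ∨ q.2.2 ≤ -Λ →
      k q.1 q.2 * k' q.2 q.1 = ℓ q.1.1 q.2.1 (q.1.2 - q.2.2) * ℓ' q.2.1 q.1.1 (q.2.2 - q.1.2) :=
    fun h => by rw [hk _ _ h, hk' _ _ h.symm]
  rcases h₁.lt_or_gt with h₁ | h₁ <;> rcases h₂.lt_or_gt with h₂ | h₂ <;>
    simp [chi, h₁.le, h₂.le, not_le.2 h₁, not_le.2 h₂, hfar]

end SFinite

section Compact

variable [TopologicalSpace Y] [SecondCountableTopology Y] [CompactSpace Y] [BorelSpace Y]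
  [IsFiniteMeasure μ]

theorem integrableOn_kernel_mul_transpose
    (hk : Continuous fun q : (Y × ℝ) × (Y × ℝ) => k q.1 q.2)
    (hk' : Continuous fun q : (Y × ℝ) × (Y × ℝ) => k' q.1 q.2) {D : ℝ}
    (hD : ∀ p r : Y × ℝ, k p r ≠ 0 → p.2 ≤ D ∧ |p.2 - r.2| ≤ D) (Λ : ℝ) :
    IntegrableOn (fun q : (Y × ℝ) × (Y × ℝ) => k q.1 q.2 * k' q.2 q.1)
      ({p : Y × ℝ | -Λ ≤ p.2} ×ˢ univ ∪ univ ×ˢ {p | -Λ ≤ p.2}) ν² := by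
  have hS : MeasurableSet {p : Y × ℝ | -Λ ≤ p.2} := measurableSet_le measurable_const measurable_snd
  let K : Set ((Y × ℝ) × (Y × ℝ)) := (univ ×ˢ Icc (-Λ - D) D) ×ˢ (univ ×ˢ Icc (-Λ - D) (D + D))
  have hK : IsCompact K :=
    (isCompact_univ.prod isCompact_Icc).prod (isCompact_univ.prod isCompact_Icc)
  refine ((hk.mul (hk'.comp continuous_swap)).continuousOn.integrableOn_compact' hK
    ((MeasurableSet.univ.prod measurableSet_Icc).prod
      (MeasurableSet.univ.prod measurableSet_Icc))).of_forall_sdiff_eq_zero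
    ((hS.prod .univ).union (MeasurableSet.univ.prod hS)) fun q ⟨hq, hqK⟩ => ?_
  by_contra hne
  obtain ⟨h₁, h₂⟩ := hD _ _ (left_ne_zero_of_mul hne)
  rw [abs_le] at h₂
  apply hqK
  simp only [K, mem_prod, mem_univ, true_and, mem_Icc]
  rcases hq with ⟨hq, -⟩ | ⟨-, hq⟩ <;> simp only [mem_ofPred_eq] at hq <;>
    exact ⟨⟨by linarith, by linarith⟩, by linarith, by linarith⟩

theorem MemBc.integrable_mul_transpose (hℓ : MemBc ℓ) (hℓ' : MemBc ℓ') :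
    Integrable (fun z : Y × Y × ℝ => ℓ z.1 z.2.1 z.2.2 * ℓ' z.2.1 z.1 (0 - z.2.2))
      (μ.prod (μ.prod volume)) := by
  have hcont : Continuous fun z : Y × Y × ℝ => ℓ z.1 z.2.1 z.2.2 * ℓ' z.2.1 z.1 (0 - z.2.2) :=
    hℓ.1.mul (hℓ'.1.comp (by fun_prop : Continuous fun z : Y × Y × ℝ => (z.2.1, z.1, 0 - z.2.2)))
  exact hcont.integrable_of_hasCompactSupport hℓ.hasCompactSupport.mul_right

theorem MemBc.integrable_conv_diag (hℓ : MemBc ℓ) (hℓ' : MemBc ℓ') :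
    Integrable (fun y => conv μ ℓ ℓ' y y 0) μ :=
  (hℓ.integrable_mul_transpose μ hℓ').integral_prod_left

theorem integral_conv_diag_comm (hℓ : MemBc ℓ) (hℓ' : MemBc ℓ') :
    ∫ y, conv μ ℓ ℓ' y y 0 ∂μ = ∫ y, conv μ ℓ' ℓ y y 0 ∂μ := by
  let σ : Y × Y × ℝ ≃ᵐ Y × Y × ℝ := MeasurableEquiv.prodAssoc.symm.trans
    ((MeasurableEquiv.prodComm.prodCongr (MeasurableEquiv.neg ℝ)).trans MeasurableEquiv.prodAssoc)
  have hσ : MeasurePreserving σ (μ.prod (μ.prod volume)) (μ.prod (μ.prod volume)) :=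
    (measurePreserving_prodAssoc μ μ volume).comp
      ((Measure.measurePreserving_swap.prod (Measure.measurePreserving_neg volume)).comp
        ((measurePreserving_prodAssoc μ μ volume).symm MeasurableEquiv.prodAssoc))
  calc ∫ y, conv μ ℓ ℓ' y y 0 ∂μ
      = ∫ z : Y × Y × ℝ, ℓ z.1 z.2.1 z.2.2 * ℓ' z.2.1 z.1 (0 - z.2.2) ∂μ.prod (μ.prod volume) :=
        (integral_prod _ (hℓ.integrable_mul_transpose μ hℓ')).symm
    _ = ∫ z : Y × Y × ℝ, ℓ' z.1 z.2.1 z.2.2 * ℓ z.2.1 z.1 (0 - z.2.2) ∂μ.prod (μ.prod volume) := by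
        rw [← hσ.integral_comp']
        congr 1 with z
        change ℓ z.2.1 z.1 (-z.2.2) * ℓ' z.1 z.2.1 (0 - -z.2.2) = _
        rw [zero_sub, zero_sub, neg_neg, mul_comm]
    _ = ∫ y, conv μ ℓ' ℓ y y 0 ∂μ := integral_prod _ (hℓ'.integrable_mul_transpose μ hℓ)

end Compact

end Kernels

/-- `τ₀^r(k ∘ k' − k' ∘ k) = σ₁(ℓ, ℓ')`, i.e. the truncated trace of
the commutator `k ∘ k' − k' ∘ k` (whose symbol is `ℓ ⋆ ℓ' − ℓ' ⋆ ℓ`) converges, as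
`λ → +∞`, to `σ₁(ℓ, ℓ')`.  Thus `(τ₀^r, σ₁)` is a relative 0-cocycle for the
symbol homomorphism `π_c : A_c(Y) → B_c(Y)`. -/
theorem regularized_trace_of_commutator_eq_sigma1
    {Y : Type*} [MetricSpace Y] [CompactSpace Y] [MeasurableSpace Y] [BorelSpace Y]
    (μ : Measure Y) [IsFiniteMeasure μ]
    (k k' : Y × ℝ → Y × ℝ → ℂ) (ℓ ℓ' : Y → Y → ℝ → ℂ)
    (hℓ : MemBc ℓ) (hℓ' : MemBc ℓ')
    (hk : MemAc k ℓ) (hk' : MemAc k' ℓ') :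
    Tendsto (fun l =>
        phiReg μ (fun p q => kcomp μ k k' p q - kcomp μ k' k p q)
          (fun y y' u => conv μ ℓ ℓ' y y' u - conv μ ℓ' ℓ y y' u) l)
      atTop (nhds (sigma1 μ ℓ ℓ')) := by
  obtain ⟨D, hD⟩ := hk.exists_support_bound hℓ
  obtain ⟨D', hD'⟩ := hk'.exists_support_bound hℓ'
  have hsymbol : ∫ y, (conv μ ℓ ℓ' y y 0 - conv μ ℓ' ℓ y y 0) ∂μ = 0 := by
    rw [integral_sub (hℓ.integrable_conv_diag μ hℓ') (hℓ'.integrable_conv_diag μ hℓ),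
      integral_conv_diag_comm μ hℓ hℓ', sub_self]
  refine tendsto_const_nhds.congr' ?_
  filter_upwards [hk.eventually_eq_symbol hℓ, hk'.eventually_eq_symbol hℓ'] with Λ hkΛ hk'Λ
  have hint := integrableOn_kernel_mul_transpose μ hk.1 hk'.1 hD Λ
  have hint' := integrableOn_kernel_mul_transpose μ hk'.1 hk.1 hD' Λ
  have hS : MeasurableSet {p : Y × ℝ | -Λ ≤ p.2} := measurableSet_le measurable_const measurable_snd
  have htrunc : (fun p : Y × ℝ => if -Λ ≤ p.2 then kcomp μ k k' p p - kcomp μ k' k p p else 0) =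
      {p | -Λ ≤ p.2}.indicator fun p => kcomp μ k k' p p - kcomp μ k' k p p := by
    ext p
    simp [Set.indicator_apply]
  rw [phiReg, hsymbol, mul_zero, sub_zero, htrunc, integral_indicator hS,
    setIntegral_kcomp_diag_commutator μ (hint.mono_set subset_union_left)
      (hint'.mono_set subset_union_left),
    setIntegral_sub_setIntegral_eq_sigma1 μ hkΛ hk'Λ hint]

end
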